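/- arXiv:2310.09075 — 2 statements merged into one kernel-verified Lean document; each statement's English description precedes it below -/
import Mathlib

section
/- Let E ⊆ ℝ² be any nonempty proper subset and fix r > 0. Then the set A := {s ∈ ℝ² : dist(s, Eᶜ) = r} has Lebesgue measure zero. -/
/-!
Let `A = {x | infDist x s = r}` with `r > 0`. For `x ∈ A` choose a nearest point `z` of
`closure s`, so `dist x z = r`. For every `ρ < r`, the ball of radius `ρ/4` around the point at
distance `ρ` from `x` towards `z` lies strictly closer than `r` to `z`, hence misses `A`. This
ball is a fixed proportion of `closedBall x ρ`, so `x` is not a Lebesgue density point of `A`;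
by the density theorem `A` is null.
-/

open MeasureTheory Metric

open Filter Set Topology Pointwise

theorem measure_eq_zero_of_forall_not_tendsto_density {β : Type*} [MetricSpace β]
    [SecondCountableTopology β] [HasBesicovitchCovering β] [MeasurableSpace β] [BorelSpace β]
    (μ : Measure β) [IsLocallyFiniteMeasure μ] {s : Set β} (hs : MeasurableSet s)
    (h : ∀ x ∈ s, ¬Tendsto (fun r => μ (s ∩ closedBall x r) / μ (closedBall x r)) (𝓝[>] 0) (𝓝 1)) :
    μ s = 0 := by
  by_contra hμs
  have : (ae (μ.restrict s)).NeBot := by rwa [ae_neBot, Ne, Measure.restrict_eq_zero]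
  obtain ⟨x, hx, hxs⟩ :=
    ((Besicovitch.ae_tendsto_measure_inter_div μ s).and (ae_restrict_mem hs)).exists
  exact h x hxs hx

section

variable {E : Type*} [NormedAddCommGroup E] [NormedSpace ℝ E]

theorem dist_lt_of_mem_add_smul_ball {x z w : E} {ρ : ℝ} (hρ : 0 < ρ) (hρz : ρ ≤ dist x z)
    (hw : w ∈ {x} + ρ • ball ((dist x z)⁻¹ • (z - x)) (1 / 4)) : dist w z < dist x z := by
  have hd : 0 < dist x z := hρ.trans_le hρz
  rw [_root_.smul_ball hρ.ne', singleton_add_ball, Real.norm_of_nonneg hρ.le] at hw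
  set y := x + ρ • ((dist x z)⁻¹ • (z - x))
  have hyz : dist y z = dist x z - ρ := by
    have hyz_eq : y - z = (1 - ρ / dist x z) • (x - z) := by
      simp only [y]
      module
    have hcoef : 0 ≤ 1 - ρ / dist x z := sub_nonneg.2 ((div_le_one hd).2 hρz)
    rw [dist_eq_norm, hyz_eq, norm_smul, Real.norm_of_nonneg hcoef, ← dist_eq_norm]
    field_simp
  calc dist w z ≤ dist w y + dist y z := dist_triangle w y z
    _ < ρ * (1 / 4) + (dist x z - ρ) := by
      rw [hyz]
      gcongr
      exact mem_ball.1 hw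
    _ < dist x z := by linarith

theorem measure_setOf_infDist_eq_zero [FiniteDimensional ℝ E] [MeasurableSpace E] [BorelSpace E]
    (μ : Measure E) [μ.IsAddHaarMeasure] (s : Set E) {r : ℝ} (hr : 0 < r) :
    μ {x | infDist x s = r} = 0 := by
  refine measure_eq_zero_of_forall_not_tendsto_density μ
    (isClosed_eq (continuous_infDist_pt s) continuous_const).measurableSet
    fun x (hx : infDist x s = r) hdens => ?_
  have hs : s.Nonempty := nonempty_iff_ne_empty.2 <| by
    rintro rfl
    exact hr.ne (infDist_empty.symm.trans hx)
  obtain ⟨z, hz, hxz⟩ := isClosed_closure.exists_infDist_eq_dist hs.closure x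
  rw [infDist_closure, hx] at hxz
  obtain ⟨ρ, ⟨w, hwA, hw⟩, hρ, hρr⟩ :=
    ((Measure.eventually_nonempty_inter_smul_of_density_one μ _ x hdens _ measurableSet_ball
      (measure_ball_pos μ ((dist x z)⁻¹ • (z - x)) (by norm_num : (0 : ℝ) < 1 / 4)).ne').and
      (Ioo_mem_nhdsGT hr)).exists
  have hwr : infDist w s < r := by
    rw [← infDist_closure]
    calc infDist w (closure s) ≤ dist w z := infDist_le_dist_of_mem hz
      _ < dist x z := dist_lt_of_mem_add_smul_ball hρ (hxz ▸ hρr.le) hw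
      _ = r := hxz.symm
  exact hwr.ne hwA

end

theorem stmt_5_general (E : Set (EuclideanSpace ℝ (Fin 2)))
    (r : ℝ) (hr : 0 < r) :
    volume {s : EuclideanSpace ℝ (Fin 2) | Metric.infDist s Eᶜ = r} = 0 :=
  measure_setOf_infDist_eq_zero volume Eᶜ hr

theorem stmt_5 (E : Set (EuclideanSpace ℝ (Fin 2))) (hne : E.Nonempty) (hproper : E ≠ Set.univ)
    (r : ℝ) (hr : 0 < r) :
    volume {s : EuclideanSpace ℝ (Fin 2) | Metric.infDist s Eᶜ = r} = 0 :=
  stmt_5_general E r hr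
end

section
/- Let X be a continuous stationary random field on ℝ², u ∈ ℝ a constant threshold with P(X(0) > u) > 0, and T ⊂ ℝ² compact with positive Lebesgue measure. Then for every r ≥ 0, the conditional probability P(B(0,r) ⊆ E_X(u) | X(0) > u) equals E[𝓛(E_X(u)_{−r} ∩ T)] / E[𝓛(E_X(u) ∩ T)], where the subscript −r denotes set erosion by radius r. -/
open MeasureTheory ProbabilityTheory Metric Pointwise

/-- Erosion of a set by the closed ball of radius `r`. -/
def erode (S : Set (EuclideanSpace ℝ (Fin 2))) (r : ℝ) : Set (EuclideanSpace ℝ (Fin 2)) :=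
  (Sᶜ + closedBall (0 : EuclideanSpace ℝ (Fin 2)) r)ᶜ

/-! By stationarity every translate `t` of the event `{B(0, r) ⊆ E_X(u)}` has the same
probability, so Tonelli's theorem on `T × Ω` gives
`E[𝓛(E_X(u)_{-r} ∩ T)] = 𝓛(T) · P(B(0, r) ⊆ E_X(u))`. Taking `r = 0` computes the
denominator, and `𝓛(T)` cancels. The event is measurable although it quantifies over a whole
ball: for continuous paths, `inf_{B(0,r)} X > u` can be tested on a countable dense subset of
the ball and rational levels. -/

theorem mem_erode_iff {S : Set (EuclideanSpace ℝ (Fin 2))} {r : ℝ}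
    {t : EuclideanSpace ℝ (Fin 2)} :
    t ∈ erode S r ↔ ∀ s ∈ closedBall (0 : EuclideanSpace ℝ (Fin 2)) r, s + t ∈ S := by
  simp only [erode, Set.mem_compl_iff, Set.mem_add, not_exists, not_and]
  constructor
  · intro h s hs
    by_contra hst
    exact h (s + t) hst (-s) (by simpa using hs) (by abel)
  · rintro h a ha b hb rfl
    exact ha (by simpa using h (-b) (by simpa using hb))

theorem erode_zero (S : Set (EuclideanSpace ℝ (Fin 2))) : erode S 0 = S := by
  ext t
  simp [mem_erode_iff]

theorem IsCompact.exists_measurableSet_forall_lt {E : Type*} [TopologicalSpace E]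
    [TopologicalSpace.PseudoMetrizableSpace E] {K : Set E} (hK : IsCompact K) (u : ℝ) :
    ∃ G : Set (E → ℝ), MeasurableSet G ∧
      ∀ f : E → ℝ, Continuous f → (f ∈ G ↔ ∀ s ∈ K, u < f s) := by
  obtain ⟨D, hDK, hDc, hKD⟩ := hK.isSeparable.exists_countable_dense_subset
  refine ⟨⋃ q : ℚ, ⋃ _ : u < q, ⋂ s ∈ D, {f | (q : ℝ) ≤ f s}, ?_, fun f hf => ?_⟩
  · exact .iUnion fun q => .iUnion fun _ => .biInter hDc fun s _ =>
      measurableSet_le measurable_const (measurable_pi_apply s)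
  simp only [Set.mem_iUnion, Set.mem_iInter, Set.mem_ofPred_eq, exists_prop]
  constructor
  · rintro ⟨q, huq, hq⟩ s hs
    have h_closure : closure D ⊆ {y | (q : ℝ) ≤ f y} :=
      (isClosed_le continuous_const hf).closure_subset_iff.mpr hq
    exact huq.trans_le (h_closure (hKD hs))
  · intro h
    rcases K.eq_empty_or_nonempty with rfl | hne
    · obtain ⟨q, hq⟩ := exists_rat_gt u
      exact ⟨q, hq, fun s hs => (hDK hs).elim⟩
    obtain ⟨x, hxK, hmin⟩ := hK.exists_isMinOn hne hf.continuousOn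
    obtain ⟨q, huq, hqx⟩ := exists_rat_btwn (h x hxK)
    exact ⟨q, huq, fun s hs => hqx.le.trans (hmin (hDK hs))⟩

theorem measure_setOf_forall_add_lt_eq {E Ω : Type*} [TopologicalSpace E]
    [TopologicalSpace.PseudoMetrizableSpace E] [Add E] [ContinuousAdd E] {_ : MeasurableSpace Ω}
    (P : Measure Ω) {X : E → Ω → ℝ} (hcont : ∀ ω, Continuous fun s => X s ω)
    (hmeas : ∀ s, Measurable (X s)) {t : E}
    (hstat : Measure.map (fun ω s => X (s + t) ω) P = Measure.map (fun ω s => X s ω) P)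
    {K : Set E} (hK : IsCompact K) (u : ℝ) :
    P {ω | ∀ s ∈ K, u < X (s + t) ω} = P {ω | ∀ s ∈ K, u < X s ω} := by
  obtain ⟨G, hGm, hG⟩ := hK.exists_measurableSet_forall_lt u
  have h_shift : {ω | ∀ s ∈ K, u < X (s + t) ω} = (fun ω s => X (s + t) ω) ⁻¹' G :=
    Set.ext fun ω => (hG _ ((hcont ω).comp (continuous_add_const t))).symm
  have h_path : {ω | ∀ s ∈ K, u < X s ω} = (fun ω s => X s ω) ⁻¹' G :=
    Set.ext fun ω => (hG _ (hcont ω)).symm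
  rw [h_shift, h_path, ← Measure.map_apply (measurable_pi_lambda _ fun s => hmeas (s + t)) hGm,
    hstat, Measure.map_apply (measurable_pi_lambda _ hmeas) hGm]

theorem lintegral_measure_setOf_forall_add_lt {E Ω : Type*} [TopologicalSpace E]
    [TopologicalSpace.MetrizableSpace E] [SecondCountableTopology E] [Add E] [ContinuousAdd E]
    [MeasurableSpace E] [BorelSpace E] {_ : MeasurableSpace Ω} (μ : Measure E) [SFinite μ]
    (P : Measure Ω) [SFinite P] {X : E → Ω → ℝ} (hcont : ∀ ω, Continuous fun s => X s ω)
    (hmeas : ∀ s, Measurable (X s))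
    (hstat : ∀ t, Measure.map (fun ω s => X (s + t) ω) P = Measure.map (fun ω s => X s ω) P)
    {K : Set E} (hK : IsCompact K) (u : ℝ) :
    ∫⁻ ω, μ {t | ∀ s ∈ K, u < X (s + t) ω} ∂P
      = P {ω | ∀ s ∈ K, u < X s ω} * μ Set.univ := by
  obtain ⟨G, hGm, hG⟩ := hK.exists_measurableSet_forall_lt u
  set S : Set (E × Ω) := {p | (fun s => X (s + p.1) p.2) ∈ G}
  have hS : MeasurableSet S := by
    refine measurable_pi_lambda _ (fun s => ?_) hGm
    exact (measurable_uncurry_of_continuous_of_measurable hcont hmeas).comp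
      (((continuous_const_add s).measurable.comp measurable_fst).prodMk measurable_snd)
  have h_section (ω : Ω) : {t | ∀ s ∈ K, u < X (s + t) ω} = (fun t => (t, ω)) ⁻¹' S :=
    Set.ext fun t => (hG _ ((hcont ω).comp (continuous_add_const t))).symm
  calc ∫⁻ ω, μ {t | ∀ s ∈ K, u < X (s + t) ω} ∂P
      = ∫⁻ ω, μ ((fun t => (t, ω)) ⁻¹' S) ∂P := by simp_rw [h_section]
    _ = μ.prod P S := (Measure.prod_apply_symm hS).symm
    _ = ∫⁻ t, P (Prod.mk t ⁻¹' S) ∂μ := Measure.prod_apply hS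
    _ = ∫⁻ _, P {ω | ∀ s ∈ K, u < X s ω} ∂μ := lintegral_congr fun t => by
      rw [← measure_setOf_forall_add_lt_eq P hcont hmeas (hstat t) hK u]
      congr 1
      exact Set.ext fun ω => hG _ ((hcont ω).comp (continuous_add_const t))
    _ = P {ω | ∀ s ∈ K, u < X s ω} * μ Set.univ := lintegral_const _

theorem stmt_7_general {Ω : Type*} [MeasurableSpace Ω] (P : Measure Ω) [IsProbabilityMeasure P]
    (X : EuclideanSpace ℝ (Fin 2) → Ω → ℝ)
    (hcont : ∀ ω, Continuous fun t => X t ω)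
    (hstat : ∀ t : EuclideanSpace ℝ (Fin 2),
      Measure.map (fun ω => (fun s => X (s + t) ω)) P
        = Measure.map (fun ω => (fun s => X s ω)) P)
    (hmeas : ∀ t, Measurable (X t))
    (u : ℝ)
    (T : Set (EuclideanSpace ℝ (Fin 2))) (hT : IsCompact T) (hTpos : 0 < volume T)
    (r : ℝ) (hr : 0 ≤ r) :
    (P[|{ω | X 0 ω > u}]) {ω | closedBall (0 : EuclideanSpace ℝ (Fin 2)) r ⊆ {t | X t ω > u}}
      = (∫⁻ ω, volume (erode {t | X t ω > u} r ∩ T) ∂P)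
        / (∫⁻ ω, volume ({t | X t ω > u} ∩ T) ∂P) := by
  have h_mean (ρ : ℝ) : ∫⁻ ω, volume (erode {t | X t ω > u} ρ ∩ T) ∂P
      = P {ω | closedBall (0 : EuclideanSpace ℝ (Fin 2)) ρ ⊆ {t | X t ω > u}}
        * volume T := by
    have h_erode (ω : Ω) : erode {t | X t ω > u} ρ
        = {t | ∀ s ∈ closedBall (0 : EuclideanSpace ℝ (Fin 2)) ρ, u < X (s + t) ω} :=
      Set.ext fun _ => mem_erode_iff
    simp_rw [h_erode, ← Measure.restrict_apply' hT.measurableSet]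
    rw [lintegral_measure_setOf_forall_add_lt (volume.restrict T) P hcont hmeas hstat
      (isCompact_closedBall 0 ρ) u, Measure.restrict_apply_univ]
    rfl
  have h_event_zero : {ω | closedBall (0 : EuclideanSpace ℝ (Fin 2)) 0 ⊆ {t | X t ω > u}}
      = {ω | X 0 ω > u} := by
    simp
  have h_event_mono : {ω | closedBall (0 : EuclideanSpace ℝ (Fin 2)) r ⊆ {t | X t ω > u}}
      ⊆ {ω | X 0 ω > u} := fun ω hω => hω (mem_closedBall_self hr)
  have h_denominator :
      ∫⁻ ω, volume ({t | X t ω > u} ∩ T) ∂P = P {ω | X 0 ω > u} * volume T := by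
    simpa only [erode_zero, h_event_zero] using h_mean 0
  rw [cond_apply (measurableSet_lt measurable_const (hmeas 0)),
    Set.inter_eq_right.mpr h_event_mono, h_mean, h_denominator,
    ENNReal.mul_div_mul_right _ _ hTpos.ne' hT.measure_lt_top.ne,
    ENNReal.div_eq_inv_mul]

theorem stmt_7 {Ω : Type*} [MeasurableSpace Ω] (P : Measure Ω) [IsProbabilityMeasure P]
    (X : EuclideanSpace ℝ (Fin 2) → Ω → ℝ)
    (hcont : ∀ ω, Continuous fun t => X t ω)
    (hstat : ∀ t : EuclideanSpace ℝ (Fin 2),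
      Measure.map (fun ω => (fun s => X (s + t) ω)) P
        = Measure.map (fun ω => (fun s => X s ω)) P)
    (hmeas : ∀ t, Measurable (X t))
    (u : ℝ) (hpos : 0 < P {ω | X 0 ω > u})
    (T : Set (EuclideanSpace ℝ (Fin 2))) (hT : IsCompact T) (hTpos : 0 < volume T)
    (r : ℝ) (hr : 0 ≤ r) :
    (P[|{ω | X 0 ω > u}]) {ω | closedBall (0 : EuclideanSpace ℝ (Fin 2)) r ⊆ {t | X t ω > u}}
      = (∫⁻ ω, volume (erode {t | X t ω > u} r ∩ T) ∂P)
        / (∫⁻ ω, volume ({t | X t ω > u} ∩ T) ∂P) :=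
  stmt_7_general P X hcont hstat hmeas u T hT hTpos r hr
end
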